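/- arXiv:2304.00783 — 4 statements merged into one kernel-verified Lean document; each statement's English description precedes it below -/
import Mathlib

section
/- Let q ≥ 0 and let f : I × [0,1] → ℝ be smooth with f(t,s) > 0 for all (t,s). Suppose f(t,s)·∂²ₜf(t,s) ≤ −q·(∂ₜf(t,s))² pointwise. Define F(t) = ∫₀¹ f(t,s) ds. Then F(t)·F''(t) ≤ −q·(F'(t))² for all t. -/
open Real intervalIntegral

open MeasureTheory Metric in
private lemma hasDerivAt_partial {f : ℝ → ℝ → ℝ} (hf : ContDiff ℝ (⊤ : ℕ∞) (Function.uncurry f))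
    (t s : ℝ) :
    HasDerivAt (fun t' => f t' s) (fderiv ℝ (Function.uncurry f) (t, s) (1, 0)) t := by
  have h1 : HasFDerivAt (Function.uncurry f) (fderiv ℝ (Function.uncurry f) (t, s)) (t, s) :=
    (hf.differentiable (by simp) (t, s)).hasFDerivAt
  have h2 : HasDerivAt (fun t' : ℝ => ((t' : ℝ), s)) ((1 : ℝ), (0 : ℝ)) t :=
    (hasDerivAt_id t).prodMk (hasDerivAt_const t s)
  exact h1.comp_hasDerivAt t h2

private lemma contDiff_partial {f : ℝ → ℝ → ℝ} (hf : ContDiff ℝ (⊤ : ℕ∞) (Function.uncurry f)) :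
    ContDiff ℝ (⊤ : ℕ∞) (Function.uncurry fun t s => deriv (fun t' => f t' s) t) := by
  have e : Function.uncurry (fun t s => deriv (fun t' => f t' s) t)
      = fun p : ℝ × ℝ => fderiv ℝ (Function.uncurry f) p (1, 0) := by
    funext p
    exact (hasDerivAt_partial hf p.1 p.2).deriv
  rw [e]
  exact (hf.fderiv_right (by simp)).clm_apply contDiff_const

private lemma hasDerivAt_partial' {f : ℝ → ℝ → ℝ} (hf : ContDiff ℝ (⊤ : ℕ∞) (Function.uncurry f))
    (t s : ℝ) :
    HasDerivAt (fun t' => f t' s) (deriv (fun t' => f t' s) t) t := by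
  have h := hasDerivAt_partial hf t s
  rwa [← h.deriv] at h

open MeasureTheory Metric in
private lemma hasDerivAt_integral_param {f : ℝ → ℝ → ℝ}
    (hf : ContDiff ℝ (⊤ : ℕ∞) (Function.uncurry f)) (t₀ : ℝ) :
    HasDerivAt (fun t => ∫ s in (0:ℝ)..1, f t s)
      (∫ s in (0:ℝ)..1, deriv (fun t' => f t' s) t₀) t₀ := by
  have hgc : Continuous (Function.uncurry fun t s => deriv (fun t' => f t' s) t) :=
    (contDiff_partial hf).continuous
  obtain ⟨C, hC⟩ := (isCompact_Icc.prod isCompact_Icc :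
      IsCompact ((Set.Icc (t₀-1) (t₀+1)) ×ˢ (Set.Icc (0:ℝ) 1))).exists_bound_of_continuousOn
      hgc.continuousOn
  refine (intervalIntegral.hasDerivAt_integral_of_dominated_loc_of_deriv_le
    (F := f) (F' := fun t s => deriv (fun t' => f t' s) t) (bound := fun _ => C)
    (s := ball t₀ 1) (ball_mem_nhds t₀ one_pos) ?_ ?_ ?_ ?_ ?_ ?_).2
  · exact Filter.Eventually.of_forall fun x =>
      (hf.continuous.comp (Continuous.prodMk_right x)).aestronglyMeasurable
  · exact (hf.continuous.comp (Continuous.prodMk_right t₀)).intervalIntegrable 0 1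
  · exact (hgc.comp (Continuous.prodMk_right t₀)).aestronglyMeasurable
  · refine Filter.Eventually.of_forall fun s hs x hx => ?_
    have hx' : x ∈ Set.Icc (t₀-1) (t₀+1) := by
      rw [Real.ball_eq_Ioo] at hx
      exact ⟨hx.1.le, hx.2.le⟩
    have hs' : s ∈ Set.Icc (0:ℝ) 1 := by
      rw [Set.uIoc_of_le zero_le_one] at hs
      exact ⟨hs.1.le, hs.2⟩
    exact hC (x, s) ⟨hx', hs'⟩
  · exact intervalIntegrable_const
  · exact Filter.Eventually.of_forall fun s _ x _ => hasDerivAt_partial' hf x s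

open MeasureTheory Metric in
/-- Pointwise concavity-type decay with exponent q of a positive smooth integrand passes
to the length functional F(t) = ∫₀¹ f(t,s) ds. -/
theorem length_deceleration (q : ℝ) (hq : 0 ≤ q) (I : Set ℝ) (hI : IsOpen I)
    (f : ℝ → ℝ → ℝ) (hf : ContDiff ℝ (⊤ : ℕ∞) (Function.uncurry f))
    (hpos : ∀ t ∈ I, ∀ s ∈ Set.Icc (0 : ℝ) 1, 0 < f t s)
    (hconc : ∀ t ∈ I, ∀ s ∈ Set.Icc (0 : ℝ) 1,
      f t s * deriv (deriv fun t' => f t' s) t ≤ -q * (deriv (fun t' => f t' s) t) ^ 2) :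
    ∀ t ∈ I,
      (∫ s in (0 : ℝ)..1, f t s) *
          deriv (deriv fun t' => ∫ s in (0 : ℝ)..1, f t' s) t ≤
        -q * (deriv (fun t' => ∫ s in (0 : ℝ)..1, f t' s) t) ^ 2 := by
  intro t ht
  set g : ℝ → ℝ → ℝ := fun t s => deriv (fun t' => f t' s) t with hgdef
  have hg : ContDiff ℝ (⊤ : ℕ∞) (Function.uncurry g) := contDiff_partial hf
  set h : ℝ → ℝ → ℝ := fun t s => deriv (fun t' => g t' s) t with hhdef
  have hF' : deriv (fun t' => ∫ s in (0:ℝ)..1, f t' s) = fun t => ∫ s in (0:ℝ)..1, g t s :=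
    funext fun t => (hasDerivAt_integral_param hf t).deriv
  have hF'' : deriv (deriv fun t' => ∫ s in (0:ℝ)..1, f t' s) t = ∫ s in (0:ℝ)..1, h t s := by
    rw [hF']
    exact (hasDerivAt_integral_param hg t).deriv
  rw [hF'', hF']
  -- continuity
  have hAc : Continuous fun s => f t s := hf.continuous.comp (Continuous.prodMk_right t)
  have hBc : Continuous fun s => g t s := hg.continuous.comp (Continuous.prodMk_right t)
  have hCc : Continuous fun s => h t s :=
    (contDiff_partial hg).continuous.comp (Continuous.prodMk_right t)
  have hApos : ∀ s ∈ Set.Icc (0:ℝ) 1, 0 < f t s := hpos t ht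
  have hint_f : IntervalIntegrable (fun s => f t s) volume 0 1 := hAc.intervalIntegrable 0 1
  have hint_g : IntervalIntegrable (fun s => g t s) volume 0 1 := hBc.intervalIntegrable 0 1
  have hint_h : IntervalIntegrable (fun s => h t s) volume 0 1 := hCc.intervalIntegrable 0 1
  have hint_D : IntervalIntegrable (fun s => (g t s)^2 / f t s) volume 0 1 := by
    apply ContinuousOn.intervalIntegrable
    rw [Set.uIcc_of_le zero_le_one]
    exact ((hBc.pow 2).continuousOn).div hAc.continuousOn (fun s hs => (hApos s hs).ne')
  -- Cauchy-Schwarz via discriminant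
  have hCS : (∫ s in (0:ℝ)..1, g t s)^2 ≤
      (∫ s in (0:ℝ)..1, f t s) * (∫ s in (0:ℝ)..1, (g t s)^2 / f t s) := by
    have hd := discrim_le_zero (a := ∫ s in (0:ℝ)..1, f t s)
      (b := 2 * ∫ s in (0:ℝ)..1, g t s) (c := ∫ s in (0:ℝ)..1, (g t s)^2 / f t s) ?_
    · rw [discrim] at hd; nlinarith [hd]
    · intro x
      have e1 : IntervalIntegrable (fun s => f t s * (x*x)) volume 0 1 := hint_f.mul_const _
      have e2 : IntervalIntegrable (fun s => 2 * g t s * x) volume 0 1 :=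
        (hint_g.const_mul 2).mul_const x
      have key : (∫ s in (0:ℝ)..1, f t s) * (x*x) + (2 * ∫ s in (0:ℝ)..1, g t s) * x
          + (∫ s in (0:ℝ)..1, (g t s)^2 / f t s)
          = ∫ s in (0:ℝ)..1, (f t s * (x*x) + 2 * g t s * x + (g t s)^2 / f t s) := by
        rw [intervalIntegral.integral_add (e1.add e2) hint_D,
          intervalIntegral.integral_add e1 e2, intervalIntegral.integral_mul_const]
        have : (∫ s in (0:ℝ)..1, 2 * g t s * x) = (2 * ∫ s in (0:ℝ)..1, g t s) * x := by
          rw [intervalIntegral.integral_mul_const, intervalIntegral.integral_const_mul]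
        rw [this]
      rw [key]
      apply intervalIntegral.integral_nonneg zero_le_one
      intro s hs
      have hA := hApos s hs
      have keyeq : f t s * (x*x) + 2 * g t s * x + (g t s)^2 / f t s
          = (x * f t s + g t s)^2 / f t s := by
        field_simp
        ring
      rw [keyeq]
      positivity
  -- pointwise bound on the second derivative integrand
  have hmono : (∫ s in (0:ℝ)..1, h t s) ≤ ∫ s in (0:ℝ)..1, -q * ((g t s)^2 / f t s) := by
    apply intervalIntegral.integral_mono_on zero_le_one hint_h (hint_D.const_mul _)
    intro s hs
    have hA := hApos s hs
    have hc : f t s * h t s ≤ -q * (g t s)^2 := hconc t ht s hs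
    rw [← mul_div_assoc, le_div_iff₀ hA]
    nlinarith [hc]
  have hAnn : 0 ≤ ∫ s in (0:ℝ)..1, f t s :=
    intervalIntegral.integral_nonneg zero_le_one (fun s hs => (hApos s hs).le)
  calc (∫ s in (0:ℝ)..1, f t s) * (∫ s in (0:ℝ)..1, h t s)
      ≤ (∫ s in (0:ℝ)..1, f t s) * ∫ s in (0:ℝ)..1, -q * ((g t s)^2 / f t s) :=
        mul_le_mul_of_nonneg_left hmono hAnn
    _ = -q * ((∫ s in (0:ℝ)..1, f t s) * ∫ s in (0:ℝ)..1, (g t s)^2 / f t s) := by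
        rw [intervalIntegral.integral_const_mul]; ring
    _ ≤ -q * (∫ s in (0:ℝ)..1, g t s)^2 := by
        have := mul_le_mul_of_nonneg_left hCS hq
        linarith
end

section
/- Under the hypotheses of the previous statement (Friedmann equations with a'(t₀) ≠ 0): if in addition q(t₀) > 1/2 and P(t₀) ≤ 0, then K > 0. -/
/-- FLRW closure criterion: if q(t₀) > 1/2 and P(t₀) ≤ 0 then K > 0. -/
theorem flrw_closure (I : Set ℝ) (hI : IsOpen I) (a ρ P : ℝ → ℝ) (K : ℝ)
    (ha : ContDiffOn ℝ (⊤ : ℕ∞) a I) (hapos : ∀ t ∈ I, 0 < a t)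
    (hF1 : ∀ t ∈ I, (deriv a t / a t) ^ 2 = ρ t / 3 - K / (a t) ^ 2)
    (hF2 : ∀ t ∈ I, deriv (deriv a) t / a t = -P t / 2 - ρ t / 6)
    (t₀ : ℝ) (ht₀ : t₀ ∈ I) (ha' : deriv a t₀ ≠ 0)
    (hq : -(deriv (deriv a) t₀ * a t₀) / (deriv a t₀) ^ 2 > 1 / 2)
    (hP : P t₀ ≤ 0) : 0 < K := by
  have hA := hapos t₀ ht₀
  have h1 := hF1 t₀ ht₀
  have h2 := hF2 t₀ ht₀
  set A := a t₀ with hAdef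
  set B := deriv a t₀ with hBdef
  set C := deriv (deriv a) t₀ with hCdef
  have hAne : A ≠ 0 := ne_of_gt hA
  have hB2 : (0:ℝ) < B ^ 2 := by positivity
  have h1' : B ^ 2 = ρ t₀ / 3 * A ^ 2 - K := by
    field_simp at h1
    have h1c : B ^ 2 * 3 * A ^ 2 = (ρ t₀ * A ^ 2 - 3 * K) * A ^ 2 := by linear_combination A ^ 2 * h1
    have := mul_right_cancel₀ (pow_ne_zero 2 hAne) h1c
    linarith
  have h2' : C = (-P t₀ / 2 - ρ t₀ / 6) * A := by
    field_simp at h2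
    linarith
  have hq' : -(C * A) > B ^ 2 / 2 := by
    rw [gt_iff_lt, lt_div_iff₀ hB2] at hq
    linarith
  nlinarith [sq_nonneg A, mul_pos hA hA, mul_nonneg (neg_nonneg.mpr hP) (sq_nonneg A)]
end

section
/- Let q > 1/2 and k ≥ 0 with k < 1 + √3, and let λ₁, λ₂, λ₃, H be real numbers with λ₁ + λ₂ + λ₃ = H. Write μᵢ = λᵢ − H/3 (so μ₁+μ₂+μ₃ = 0) and |h̊|² = μ₁² + μ₂² + μ₃². Then for each i: (1+q)λᵢ² + qk(μ₁²+μ₂²+μ₃² + H²/3) − Hλᵢ ≥ ((2+2q+3qk)/2)·μᵢ² + ((q+3qk−2)/9)·H² + ((2q−1)/3)·H·μᵢ. -/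
private lemma closure_key (q k a b c H : ℝ) (hqk : 0 ≤ q * k) (hsum : a + b + c = H) :
    (1 + q) * a ^ 2 +
        q * k * ((a - H / 3) ^ 2 + (b - H / 3) ^ 2 + (c - H / 3) ^ 2 + H ^ 2 / 3) -
        H * a ≥
      ((2 + 2 * q + 3 * q * k) / 2) * (a - H / 3) ^ 2 +
        ((q + 3 * q * k - 2) / 9) * H ^ 2 + ((2 * q - 1) / 3) * H * (a - H / 3) := by
  have hc : c = H - a - b := by linarith
  subst hc
  nlinarith [mul_nonneg hqk (sq_nonneg (b - (H - a - b)))]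

theorem closure_pointwise_estimate (q k : ℝ) (hq : 1 / 2 < q) (hk0 : 0 ≤ k)
    (hk1 : k < 1 + Real.sqrt 3) (l : Fin 3 → ℝ) (H : ℝ) (hsum : l 0 + l 1 + l 2 = H)
    (i : Fin 3) :
    (1 + q) * (l i) ^ 2 +
        q * k * ((l 0 - H / 3) ^ 2 + (l 1 - H / 3) ^ 2 + (l 2 - H / 3) ^ 2 + H ^ 2 / 3) -
        H * l i ≥
      ((2 + 2 * q + 3 * q * k) / 2) * (l i - H / 3) ^ 2 +
        ((q + 3 * q * k - 2) / 9) * H ^ 2 + ((2 * q - 1) / 3) * H * (l i - H / 3) := by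
  have hqk : 0 ≤ q * k := by nlinarith
  have hi : l i = l 0 ∨ l i = l 1 ∨ l i = l 2 := by
    have : i = 0 ∨ i = 1 ∨ i = 2 := by omega
    rcases this with h | h | h <;> subst h <;> simp
  rcases hi with h | h | h <;> rw [h]
  · exact closure_key q k (l 0) (l 1) (l 2) H hqk (by linarith)
  · have := closure_key q k (l 1) (l 0) (l 2) H hqk (by linarith)
    linarith
  · have := closure_key q k (l 2) (l 0) (l 1) H hqk (by linarith)
    linarith
end

section
/- Let k ∈ ℝ with (√43−3)/6 < k < 1 + √3, and let λ₁, λ₂, λ₃, H ∈ ℝ with λ₁+λ₂+λ₃ = H, μᵢ = λᵢ − H/3. Then for each i: 2λᵢ² − Hλᵢ + k(μ₁²+μ₂²+μ₃² + H²/3) ≥ ((18k²+18k−17)/(18(4+3k)))·H². -/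
lemma energy_decel_key (k H a S : ℝ) (hk : k > 1 / 2) (hS : S ≥ 3 / 2 * a ^ 2) :
    (18 * k ^ 2 + 18 * k - 17) * H ^ 2 ≤
      (2 * (a + H / 3) ^ 2 - H * (a + H / 3) + k * (S + H ^ 2 / 3)) * (18 * (4 + 3 * k)) := by
  have hd : (0 : ℝ) < 4 + 3 * k := by linarith
  nlinarith [sq_nonneg (3 * (4 + 3 * k) * a + H), sq_nonneg H,
    mul_nonneg (mul_nonneg (by linarith : (0:ℝ) ≤ k) hd.le)
      (by linarith : (0:ℝ) ≤ S - 3 / 2 * a ^ 2)]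

theorem energy_decel_pointwise_estimate (k : ℝ) (hk0 : (Real.sqrt 43 - 3) / 6 < k)
    (hk1 : k < 1 + Real.sqrt 3) (l : Fin 3 → ℝ) (H : ℝ) (hsum : l 0 + l 1 + l 2 = H)
    (i : Fin 3) :
    2 * (l i) ^ 2 - H * l i +
        k * ((l 0 - H / 3) ^ 2 + (l 1 - H / 3) ^ 2 + (l 2 - H / 3) ^ 2 + H ^ 2 / 3) ≥
      ((18 * k ^ 2 + 18 * k - 17) / (18 * (4 + 3 * k))) * H ^ 2 := by
  have hs : Real.sqrt 43 > 6 := by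
    nlinarith [Real.sq_sqrt (show (0:ℝ) ≤ 43 by norm_num), Real.sqrt_nonneg 43]
  have hk : k > 1 / 2 := by linarith
  have hd : (0:ℝ) < 18 * (4 + 3 * k) := by linarith
  rw [ge_iff_le, div_mul_eq_mul_div, div_le_iff₀ hd]
  set S := (l 0 - H / 3) ^ 2 + (l 1 - H / 3) ^ 2 + (l 2 - H / 3) ^ 2 with hSdef
  fin_cases i <;> simp only [Fin.isValue]
  · have hS : S ≥ 3 / 2 * (l 0 - H / 3) ^ 2 := by
      have e : ((l 1 - H / 3) + (l 2 - H / 3)) ^ 2 = (l 0 - H / 3) ^ 2 := by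
        have : (l 1 - H / 3) + (l 2 - H / 3) = -(l 0 - H / 3) := by linarith
        rw [this]; ring
      rw [hSdef]; nlinarith [e, sq_nonneg (l 1 - l 2)]
    have := energy_decel_key k H (l 0 - H / 3) S hk hS
    calc (18 * k ^ 2 + 18 * k - 17) * H ^ 2 ≤
        (2 * ((l 0 - H / 3) + H / 3) ^ 2 - H * ((l 0 - H / 3) + H / 3) + k * (S + H ^ 2 / 3)) *
          (18 * (4 + 3 * k)) := this
      _ = (2 * l 0 ^ 2 - H * l 0 + k * (S + H ^ 2 / 3)) * (18 * (4 + 3 * k)) := by ring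
  · have hS : S ≥ 3 / 2 * (l 1 - H / 3) ^ 2 := by
      have e : ((l 0 - H / 3) + (l 2 - H / 3)) ^ 2 = (l 1 - H / 3) ^ 2 := by
        have : (l 0 - H / 3) + (l 2 - H / 3) = -(l 1 - H / 3) := by linarith
        rw [this]; ring
      rw [hSdef]; nlinarith [e, sq_nonneg (l 0 - l 2)]
    have := energy_decel_key k H (l 1 - H / 3) S hk hS
    calc (18 * k ^ 2 + 18 * k - 17) * H ^ 2 ≤
        (2 * ((l 1 - H / 3) + H / 3) ^ 2 - H * ((l 1 - H / 3) + H / 3) + k * (S + H ^ 2 / 3)) *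
          (18 * (4 + 3 * k)) := this
      _ = (2 * l 1 ^ 2 - H * l 1 + k * (S + H ^ 2 / 3)) * (18 * (4 + 3 * k)) := by ring
  · have hS : S ≥ 3 / 2 * (l 2 - H / 3) ^ 2 := by
      have e : ((l 0 - H / 3) + (l 1 - H / 3)) ^ 2 = (l 2 - H / 3) ^ 2 := by
        have : (l 0 - H / 3) + (l 1 - H / 3) = -(l 2 - H / 3) := by linarith
        rw [this]; ring
      rw [hSdef]; nlinarith [e, sq_nonneg (l 0 - l 1)]
    have := energy_decel_key k H (l 2 - H / 3) S hk hS
    calc (18 * k ^ 2 + 18 * k - 17) * H ^ 2 ≤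
        (2 * ((l 2 - H / 3) + H / 3) ^ 2 - H * ((l 2 - H / 3) + H / 3) + k * (S + H ^ 2 / 3)) *
          (18 * (4 + 3 * k)) := this
      _ = (2 * l 2 ^ 2 - H * l 2 + k * (S + H ^ 2 / 3)) * (18 * (4 + 3 * k)) := by ring
end
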